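/- arXiv:2102.11816 — 4 statements merged into one kernel-verified Lean document; each statement's English description precedes it below -/
import Mathlib

section
/- The shuffle product ⧢ on ℂLF is associative, the horizontal mirror map θ is an involution (θ ∘ θ = id on ℂLF), and θ is an antiautomorphism of the shuffle algebra: θ(f ⧢ g) = θ(g) ⧢ θ(f) for all levelled forests f and g. -/
/-- The free complex vector space on the set of levelled forests.  A levelled forest
`f = (σ, (c_1,…,c_k))` with `σ ∈ S_n`, `c ⊨₀ n`, is encoded by the list of the `k` blocks
(of sizes `c_1,…,c_k`) of the one-line word of `σ` (letters in `{1,…,n}`). -/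
abbrev CLF : Type := (List (List ℕ)) →₀ ℂ

/-- `B` encodes a genuine levelled forest: it is a nonempty list of blocks whose
concatenation is a permutation word of `{1,…,n}` where `n = ‖f‖` is the number of
generations.  The number of trees is `nt(f) = B.length`. -/
def IsLF (B : List (List ℕ)) : Prop :=
  B ≠ [] ∧ List.Perm B.flatten (List.range' 1 B.flatten.length)

/-- `η ∈ S_N` is an `(a, N-a)`-shuffle: it is strictly increasing on the first `a`
positions and on the remaining positions (zero-based positions). -/
def IsShuffle {N : ℕ} (a : ℕ) (η : Equiv.Perm (Fin N)) : Prop :=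
  ∀ i j : Fin N, i < j → ((j : ℕ) < a ∨ a ≤ (i : ℕ)) → η i < η j

instance {N a : ℕ} : DecidablePred (fun η : Equiv.Perm (Fin N) => IsShuffle a η) :=
  fun η => by unfold IsShuffle; infer_instance

/-- The finite set `Sh(a, N-a)` of `(a, N-a)`-shuffles inside `S_N`. -/
def shuffles (N a : ℕ) : Finset (Equiv.Perm (Fin N)) :=
  Finset.univ.filter (fun η => IsShuffle a η)

/-- The action of `α ∈ S_N` on a (one-based) letter. -/
def relabel {N : ℕ} (α : Equiv.Perm (Fin N)) (ℓ : ℕ) : ℕ :=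
  if h : ℓ - 1 < N then (α ⟨ℓ - 1, h⟩ : ℕ) + 1 else ℓ

/-- The left action `α · (σ, c) = (α∘σ, c)` of a permutation on a levelled forest,
realized as relabelling of the letters of the forest word. -/
def relabelF {N : ℕ} (α : Equiv.Perm (Fin N)) (B : List (List ℕ)) : List (List ℕ) :=
  B.map (List.map (relabel α))

/-- Shift all letters of a forest word by `n` (used for `τ + n`). -/
def shiftF (n : ℕ) (B : List (List ℕ)) : List (List ℕ) :=
  B.map (List.map (· + n))

/-- The block pattern of the shuffle product: the blocks
`(c_1,…,c_{k−1}, c_k + c'_1, c'_2,…,c'_q)`, i.e. the last block of `F` is merged with the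
first block of `G`. -/
def mergeBlocks (F G : List (List ℕ)) : List (List ℕ) :=
  F.dropLast ++ (F.getLastD [] ++ G.headD []) :: G.tail

/-- The shuffle product of two levelled forests `f = (σ,(c_1,…,c_k))`,
`g = (σ',(c'_1,…,c'_q))`:
`f ⧢ g = Σ_{α ∈ Sh(n,m)} (α∘(σ⊗σ'), (c_1,…,c_{k−1}, c_k + c'_1, c'_2,…,c'_q)) ∈ ℂLF`. -/
noncomputable def shuffleMulW (F G : List (List ℕ)) : CLF :=
  ∑ η ∈ shuffles (F.flatten.length + G.flatten.length) F.flatten.length,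
    Finsupp.single (relabelF η (mergeBlocks F (shiftF F.flatten.length G))) (1 : ℂ)

/-- The bilinear extension of the shuffle product to `ℂLF`. -/
noncomputable def mulCLF (x y : CLF) : CLF :=
  x.sum fun F a => y.sum fun G b => (a * b) • shuffleMulW F G

/-- The horizontal mirror `θ(σ,(c_1,…,c_k)) = (σ∘c_n, (c_k,…,c_1))`: on forest words it
reverses the list of blocks and each block. -/
def thetaW (B : List (List ℕ)) : List (List ℕ) :=
  (B.map List.reverse).reverse

/-- The linear extension of `θ` to `ℂLF`. -/
noncomputable def theta : CLF → CLF := Finsupp.mapDomain thetaW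

/-!
Every `α ∈ S_N` factors uniquely as `α = β ∘ (σ ⊗ τ)` with `β ∈ Sh(a, N - a)`, `σ ∈ S_a`,
`τ ∈ S_{N-a}`: take for `β` the shuffle sending `{0, …, a-1}` onto `α {0, …, a-1}`. Since `β` is
increasing on both blocks, `β ∘ (σ ⊗ τ)` is increasing on a sub-interval of a block exactly when
`σ` (resp. `τ`) is. Hence the `(n, m, p)`-shuffles are exactly the products `β ∘ (η ⊗ 1)` with
`η ∈ Sh(n, m)`, `β ∈ Sh(n + m, p)`, and also exactly the products `δ ∘ (1 ⊗ γ)` with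
`γ ∈ Sh(m, p)`, `δ ∈ Sh(n, m + p)`. Expanding `(f ⧢ g) ⧢ h` and `f ⧢ (g ⧢ h)` gives these two
sums over the same forest word, which proves associativity.

The mirror reverses the word of `f ⧢ g`, so the letters of `θ g` come first. Relabelling by the
permutation that swaps the two value blocks turns this into the word of `θ g ⧢ θ f`, and right
multiplication by that swap maps `Sh(m, n)` bijectively onto `Sh(n, m)`.
-/

open Equiv Finset

section BlockSum

variable {a b N : ℕ}

/-- The block sum `(σ, τ) ↦ σ ⊗ τ`. -/
def blockSum (h : a + b = N) : Perm (Fin a) × Perm (Fin b) →* Perm (Fin N) :=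
  (finSumFinEquiv.trans (finCongr h)).permCongrHom.toMonoidHom.comp (Perm.sumCongrHom _ _)

lemma blockSum_apply (h : a + b = N) (q : Perm (Fin a) × Perm (Fin b)) (x : Fin N) :
    blockSum h q x =
      finCongr h (finSumFinEquiv (Sum.map q.1 q.2 (finSumFinEquiv.symm (finCongr h.symm x)))) :=
  rfl

lemma blockSum_apply_of_lt (h : a + b = N) (q : Perm (Fin a) × Perm (Fin b)) {x : Fin N}
    (hx : (x : ℕ) < a) : (blockSum h q x : ℕ) = q.1 ⟨x, hx⟩ := by
  rw [blockSum_apply, show finCongr h.symm x = Fin.castAdd b ⟨x, hx⟩ from rfl,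
    finSumFinEquiv_symm_apply_castAdd]
  simp

lemma blockSum_apply_of_le (h : a + b = N) (q : Perm (Fin a) × Perm (Fin b)) {x : Fin N}
    (hx : a ≤ (x : ℕ)) : (blockSum h q x : ℕ) = a + q.2 ⟨x - a, by omega⟩ := by
  rw [blockSum_apply, show finCongr h.symm x = Fin.natAdd a ⟨x - a, by omega⟩ by
    ext; simp; omega, finSumFinEquiv_symm_apply_natAdd]
  simp

lemma blockSum_lt_iff (h : a + b = N) (q : Perm (Fin a) × Perm (Fin b)) (x : Fin N) :
    (blockSum h q x : ℕ) < a ↔ (x : ℕ) < a := by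
  by_cases hx : (x : ℕ) < a
  · simp [blockSum_apply_of_lt h q hx, hx]
  · simp [blockSum_apply_of_le h q (not_lt.mp hx), hx]

lemma mem_range_blockSum (h : a + b = N) {π : Perm (Fin N)}
    (hπ : ∀ x : Fin N, (x : ℕ) < a → (π x : ℕ) < a) : π ∈ (blockSum h).range := by
  set e := finSumFinEquiv.trans (finCongr h)
  obtain ⟨q, hq⟩ := Perm.mem_sumCongrHom_range_of_perm_mapsTo_inl (σ := e.symm.permCongr π) (by
    rintro _ ⟨x, rfl⟩
    refine ⟨⟨π (e (Sum.inl x)), hπ _ (by simp [e])⟩, e.injective ?_⟩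
    simp [e])
  refine ⟨q, ?_⟩
  change e.permCongr _ = π
  rw [hq]
  exact e.permCongr.apply_symm_apply π

end BlockSum

section Increasing

variable {a b N : ℕ}

lemma mem_shuffles {η : Perm (Fin N)} : η ∈ shuffles N a ↔ IsShuffle a η := by
  simp [shuffles]

def IsIncreasingOn (α : Perm (Fin N)) (lo hi : ℕ) : Prop :=
  ∀ i j : Fin N, lo ≤ (i : ℕ) → i < j → (j : ℕ) < hi → α i < α j

lemma isShuffle_iff {η : Perm (Fin N)} :
    IsShuffle a η ↔ IsIncreasingOn η 0 a ∧ IsIncreasingOn η a N := by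
  refine ⟨fun hη => ⟨fun i j _ hij hj => hη i j hij (Or.inl hj),
    fun i j hi hij _ => hη i j hij (Or.inr hi)⟩, ?_⟩
  rintro ⟨h₁, h₂⟩ i j hij (hj | hi)
  · exact h₁ i j (Nat.zero_le _) hij hj
  · exact h₂ i j hi hij j.isLt

lemma isIncreasingOn_zero_iff_eq_one {τ : Perm (Fin b)} : IsIncreasingOn τ 0 b ↔ τ = 1 := by
  rw [← Perm.monotone_iff]
  exact ⟨fun hτ => StrictMono.monotone fun i j hij => hτ i j (Nat.zero_le _) hij j.isLt,
    fun hτ i j _ hij _ => hτ.strictMono_of_injective τ.injective hij⟩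

lemma IsIncreasingOn.mul_iff {β π : Perm (Fin N)} {lo hi lo' hi' : ℕ}
    (hβ : IsIncreasingOn β lo' hi')
    (hπ : ∀ x : Fin N, lo ≤ (x : ℕ) → (x : ℕ) < hi → lo' ≤ (π x : ℕ) ∧ (π x : ℕ) < hi') :
    IsIncreasingOn (β * π) lo hi ↔ IsIncreasingOn π lo hi := by
  refine ⟨fun h i j hi hij hj => ?_, fun h i j hi hij hj => ?_⟩
  all_goals
    have := Fin.lt_def.mp hij
    obtain ⟨hi₁, hi₂⟩ := hπ i hi (by omega)
    obtain ⟨hj₁, hj₂⟩ := hπ j (by omega) hj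
  · refine lt_of_le_of_ne (not_lt.mp fun hlt => ?_) (π.injective.ne hij.ne)
    exact (hβ _ _ hj₁ hlt hi₂).asymm (h i j hi hij hj)
  · exact hβ _ _ hi₁ (h i j hi hij hj) hj₂

lemma isIncreasingOn_blockSum_iff_fst (h : a + b = N) (q : Perm (Fin a) × Perm (Fin b))
    {lo hi : ℕ} (hhi : hi ≤ a) :
    IsIncreasingOn (blockSum h q) lo hi ↔ IsIncreasingOn q.1 lo hi := by
  refine ⟨fun hq i j hi hij hj => ?_, fun hq x y hx hxy hy => ?_⟩
  · have := hq ⟨i, by omega⟩ ⟨j, by omega⟩ hi hij hj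
    rwa [Fin.lt_def, blockSum_apply_of_lt h q (x := ⟨i, _⟩) (by simp),
      blockSum_apply_of_lt h q (x := ⟨j, _⟩) (by simp)] at this
  · have := Fin.lt_def.mp hxy
    rw [Fin.lt_def, blockSum_apply_of_lt h q (by omega), blockSum_apply_of_lt h q (by omega)]
    exact hq _ _ hx hxy (by simp; omega)

lemma isIncreasingOn_blockSum_iff_snd (h : a + b = N) (q : Perm (Fin a) × Perm (Fin b))
    {lo hi : ℕ} :
    IsIncreasingOn (blockSum h q) (a + lo) (a + hi) ↔ IsIncreasingOn q.2 lo hi := by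
  refine ⟨fun hq i j hi hij hj => ?_, fun hq x y hx hxy hy => ?_⟩
  · have := Fin.lt_def.mp hij
    have := hq ⟨a + i, by omega⟩ ⟨a + j, by omega⟩ (by simp; omega)
      (Fin.mk_lt_mk.mpr (by omega)) (by simp; omega)
    rw [Fin.lt_def, blockSum_apply_of_le h q (by simp), blockSum_apply_of_le h q (by simp)] at this
    simpa using this
  · have := Fin.lt_def.mp hxy
    rw [Fin.lt_def, blockSum_apply_of_le h q (by omega), blockSum_apply_of_le h q (by omega)]
    simpa using hq ⟨x - a, _⟩ ⟨y - a, _⟩ (by simp; omega) (Fin.mk_lt_mk.mpr (by omega))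
      (by simp; omega)

end Increasing

section Factorization

variable {a b N : ℕ} {β : Perm (Fin N)} (h : a + b = N)

lemma IsShuffle.isIncreasingOn_mul_blockSum_iff_fst (hβ : IsShuffle a β)
    (q : Perm (Fin a) × Perm (Fin b)) {lo hi : ℕ} (hhi : hi ≤ a) :
    IsIncreasingOn (β * blockSum h q) lo hi ↔ IsIncreasingOn q.1 lo hi := by
  rw [(isShuffle_iff.mp hβ).1.mul_iff fun x _ hx => ⟨Nat.zero_le _, by
    rw [blockSum_lt_iff]; omega⟩, isIncreasingOn_blockSum_iff_fst h q hhi]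

lemma IsShuffle.isIncreasingOn_mul_blockSum_iff_snd (hβ : IsShuffle a β)
    (q : Perm (Fin a) × Perm (Fin b)) {lo hi : ℕ} :
    IsIncreasingOn (β * blockSum h q) (a + lo) (a + hi) ↔ IsIncreasingOn q.2 lo hi := by
  rw [(isShuffle_iff.mp hβ).2.mul_iff fun x hx _ => ⟨not_lt.mp fun hlt => by
    rw [blockSum_lt_iff] at hlt; omega, (blockSum h q x).isLt⟩,
    isIncreasingOn_blockSum_iff_snd h q]

lemma IsShuffle.eq_one_of_isShuffle_mul_blockSum (hβ : IsShuffle a β)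
    {q : Perm (Fin a) × Perm (Fin b)} (hq : IsShuffle a (β * blockSum h q)) : q = 1 := by
  obtain ⟨h₁, h₂⟩ := isShuffle_iff.mp hq
  rw [hβ.isIncreasingOn_mul_blockSum_iff_fst h q le_rfl, isIncreasingOn_zero_iff_eq_one] at h₁
  have h₂' := (hβ.isIncreasingOn_mul_blockSum_iff_snd h q (lo := 0) (hi := b)).mp
    (by rwa [add_zero, h])
  exact Prod.ext h₁ (isIncreasingOn_zero_iff_eq_one.mp h₂')

lemma exists_isShuffle_mul_blockSum_eq (α : Perm (Fin N)) :
    ∃ β, IsShuffle a β ∧ ∃ q, β * blockSum h q = α := by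
  -- `Tuple.sort key` stably sorts the positions by whether `α⁻¹` sends them past the first block,
  -- so it is a shuffle with the same first-block image as `α`
  let key : Fin N → Bool := fun y => decide (a ≤ (α⁻¹ y : ℕ))
  have hkey : ∀ x, a ≤ (α⁻¹ (Tuple.sort key x) : ℕ) ↔ a ≤ (x : ℕ) := by
    have := Tuple.unique_monotone (f := key) (Tuple.monotone_sort key) (τ := α) fun x y hxy => by
      simp only [Function.comp_apply, key, Perm.coe_inv, symm_apply_apply, Bool.le_iff_imp,
        decide_eq_true_eq]
      exact fun hx => hx.trans hxy
    intro x
    simpa [key] using congrFun this x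
  generalize hβ : Tuple.sort key = β at hkey
  have hπ : ∀ x, ((β⁻¹ * α) x : ℕ) < a ↔ (x : ℕ) < a := by
    intro x
    have := hkey ((β⁻¹ * α) x)
    simp only [Perm.mul_apply, Perm.coe_inv, apply_symm_apply, symm_apply_apply] at this ⊢
    omega
  obtain ⟨q, hq⟩ := mem_range_blockSum h fun x hx => (hπ x).mpr hx
  refine ⟨β, fun i j hij hblock => ?_, q, by rw [hq, mul_inv_cancel_left]⟩
  refine (Tuple.eq_sort_iff.mp hβ.symm).2 i j hij ?_
  simp only [key, decide_eq_decide, hkey]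
  have := Fin.lt_def.mp hij
  omega

theorem sum_eq_sum_shuffles_blockSum {M : Type*} [AddCommMonoid M] (g : Perm (Fin N) → M) :
    ∑ α, g α = ∑ β ∈ shuffles N a, ∑ q, g (β * blockSum h q) := by
  rw [← Finset.sum_product']
  symm
  apply Finset.sum_nbij fun r => r.1 * blockSum h r.2
  · simp
  · rintro ⟨β, q⟩ hr ⟨β', q'⟩ hr' heq
    simp only [Finset.coe_product, Set.mem_prod, Finset.mem_coe, mem_shuffles] at hr hr' heq
    have hq : q' * q⁻¹ = 1 := hr'.1.eq_one_of_isShuffle_mul_blockSum h (by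
      rw [map_mul, map_inv, ← mul_assoc, ← heq, mul_inv_cancel_right]
      exact hr.1)
    obtain rfl : q' = q := mul_inv_eq_one.mp hq
    rw [mul_right_cancel heq]
  · intro α _
    obtain ⟨β, hβ, q, rfl⟩ := exists_isShuffle_mul_blockSum_eq h α
    exact ⟨(β, q), by simp [mem_shuffles, hβ], rfl⟩
  · simp

end Factorization

section TripleShuffles

variable {N n m p : ℕ} {β : Perm (Fin N)}

def IsShuffle3 (n m : ℕ) (α : Perm (Fin N)) : Prop :=
  IsIncreasingOn α 0 n ∧ IsIncreasingOn α n (n + m) ∧ IsIncreasingOn α (n + m) N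

instance : DecidablePred (IsShuffle3 (N := N) n m) :=
  fun α => by unfold IsShuffle3 IsIncreasingOn; infer_instance

def shuffles3 (N n m : ℕ) : Finset (Perm (Fin N)) :=
  univ.filter (IsShuffle3 n m)

lemma IsShuffle.isShuffle3_mul_blockSum_left_iff (h : n + m + p = N)
    (hβ : IsShuffle (n + m) β) (q : Perm (Fin (n + m)) × Perm (Fin p)) :
    IsShuffle3 n m (β * blockSum h q) ↔ IsShuffle n q.1 ∧ q.2 = 1 := by
  have hlast := hβ.isIncreasingOn_mul_blockSum_iff_snd h q (lo := 0) (hi := p)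
  rw [add_zero, h] at hlast
  rw [IsShuffle3, hβ.isIncreasingOn_mul_blockSum_iff_fst h q (by omega),
    hβ.isIncreasingOn_mul_blockSum_iff_fst h q le_rfl, hlast, isIncreasingOn_zero_iff_eq_one,
    isShuffle_iff, and_assoc]

lemma IsShuffle.isShuffle3_mul_blockSum_right_iff (h : n + (m + p) = N) (hβ : IsShuffle n β)
    (q : Perm (Fin n) × Perm (Fin (m + p))) :
    IsShuffle3 n m (β * blockSum h q) ↔ q.1 = 1 ∧ IsShuffle m q.2 := by
  have hmid := hβ.isIncreasingOn_mul_blockSum_iff_snd h q (lo := 0) (hi := m)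
  have hlast := hβ.isIncreasingOn_mul_blockSum_iff_snd h q (lo := m) (hi := m + p)
  rw [add_zero] at hmid
  rw [h] at hlast
  rw [IsShuffle3, hβ.isIncreasingOn_mul_blockSum_iff_fst h q le_rfl,
    isIncreasingOn_zero_iff_eq_one, hmid, hlast, isShuffle_iff]

theorem sum_shuffles3_eq_sum_left {M : Type*} [AddCommMonoid M] (h : n + m + p = N)
    (f : Perm (Fin N) → M) :
    ∑ α ∈ shuffles3 N n m, f α =
      ∑ η ∈ shuffles (n + m) n, ∑ β ∈ shuffles N (n + m), f (β * blockSum h (η, 1)) := by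
  rw [shuffles3, Finset.sum_filter, sum_eq_sum_shuffles_blockSum h,
    Finset.sum_comm (s := shuffles (n + m) n)]
  refine Finset.sum_congr rfl fun β hβ => ?_
  simp only [(mem_shuffles.mp hβ).isShuffle3_mul_blockSum_left_iff h, Fintype.sum_prod_type,
    ite_and, Finset.sum_ite_irrel, Finset.sum_ite_eq', Finset.mem_univ, if_true,
    Finset.sum_const_zero]
  rw [shuffles, Finset.sum_filter]

theorem sum_shuffles3_eq_sum_right {M : Type*} [AddCommMonoid M] (h : n + (m + p) = N)
    (f : Perm (Fin N) → M) :
    ∑ α ∈ shuffles3 N n m, f α =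
      ∑ γ ∈ shuffles (m + p) m, ∑ δ ∈ shuffles N n, f (δ * blockSum h (1, γ)) := by
  rw [shuffles3, Finset.sum_filter, sum_eq_sum_shuffles_blockSum h,
    Finset.sum_comm (s := shuffles (m + p) m)]
  refine Finset.sum_congr rfl fun δ hδ => ?_
  simp only [(mem_shuffles.mp hδ).isShuffle3_mul_blockSum_right_iff h,
    Fintype.sum_prod_type_right, ite_and, Finset.sum_ite_eq', Finset.mem_univ, if_true]
  rw [shuffles, Finset.sum_filter]

end TripleShuffles

section BlockSwap

variable {a b N : ℕ}

def blockSwap (h : a + b = N) : Perm (Fin N) :=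
  (finCongr h.symm).trans (finAddFlip.trans (finCongr (by omega)))

lemma blockSwap_apply_of_lt (h : a + b = N) {x : Fin N} (hx : (x : ℕ) < a) :
    (blockSwap h x : ℕ) = b + x := by
  subst h
  obtain ⟨x, hx'⟩ := x
  simp [blockSwap, finAddFlip_apply_mk_left (show x < a from hx)]

lemma blockSwap_apply_of_le (h : a + b = N) {x : Fin N} (hx : a ≤ (x : ℕ)) :
    (blockSwap h x : ℕ) = x - a := by
  subst h
  obtain ⟨x, hx'⟩ := x
  simp [blockSwap, finAddFlip_apply_mk_right (show a ≤ x from hx) hx']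

lemma blockSwap_mul_blockSwap (h : a + b = N) (h' : b + a = N) :
    blockSwap h * blockSwap h' = 1 := by
  ext x
  by_cases hx : (x : ℕ) < b
  · rw [Perm.mul_apply, blockSwap_apply_of_le h (by rw [blockSwap_apply_of_lt h' hx]; omega),
      blockSwap_apply_of_lt h' hx]
    simp
  · rw [Perm.mul_apply,
      blockSwap_apply_of_lt h (by rw [blockSwap_apply_of_le h' (by omega)]; omega),
      blockSwap_apply_of_le h' (by omega)]
    simp
    omega

lemma IsShuffle.mul_blockSwap (h : a + b = N) {η : Perm (Fin N)} (hη : IsShuffle b η) :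
    IsShuffle a (η * blockSwap h) := by
  obtain ⟨h₁, h₂⟩ := isShuffle_iff.mp hη
  refine isShuffle_iff.mpr ⟨(h₂.mul_iff fun x _ hx => ?_).mpr fun x y _ hxy hy => ?_,
    (h₁.mul_iff fun x hx _ => ?_).mpr fun x y hx hxy _ => ?_⟩
  · rw [blockSwap_apply_of_lt h hx]
    omega
  · have := Fin.lt_def.mp hxy
    rw [Fin.lt_def, blockSwap_apply_of_lt h (by omega), blockSwap_apply_of_lt h hy]
    omega
  · rw [blockSwap_apply_of_le h hx]
    omega
  · have := Fin.lt_def.mp hxy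
    rw [Fin.lt_def, blockSwap_apply_of_le h hx, blockSwap_apply_of_le h (by omega)]
    omega

lemma isShuffle_mul_blockSwap_iff (h : a + b = N) {η : Perm (Fin N)} :
    IsShuffle a (η * blockSwap h) ↔ IsShuffle b η := by
  refine ⟨fun hη => ?_, IsShuffle.mul_blockSwap h⟩
  have := hη.mul_blockSwap (show b + a = N by omega)
  rwa [mul_assoc, blockSwap_mul_blockSwap, mul_one] at this

end BlockSwap

section Words

lemma map_map_congr {f g : ℕ → ℕ} {B : List (List ℕ)} (h : ∀ ℓ ∈ B.flatten, f ℓ = g ℓ) :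
    B.map (List.map f) = B.map (List.map g) :=
  List.map_congr_left fun b hb => List.map_congr_left fun ℓ hℓ =>
    h ℓ (List.mem_flatten.mpr ⟨b, hb, hℓ⟩)

lemma map_map_eq_self {f : ℕ → ℕ} {B : List (List ℕ)} (h : ∀ ℓ ∈ B.flatten, f ℓ = ℓ) :
    B.map (List.map f) = B := by
  rw [map_map_congr (g := id) h]
  simp

lemma map_map_map (f g : ℕ → ℕ) (B : List (List ℕ)) :
    (B.map (List.map g)).map (List.map f) = B.map (List.map (f ∘ g)) := by
  simp [Function.comp_def]

lemma flatten_map_map (f : ℕ → ℕ) (B : List (List ℕ)) :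
    (B.map (List.map f)).flatten = B.flatten.map f := by
  rw [List.map_flatten]

lemma length_flatten_map_map (f : ℕ → ℕ) (B : List (List ℕ)) :
    (B.map (List.map f)).flatten.length = B.flatten.length := by
  rw [flatten_map_map, List.length_map]

lemma shiftF_ne_nil {B : List (List ℕ)} (hB : B ≠ []) (k : ℕ) : shiftF k B ≠ [] := by
  simpa [shiftF] using hB

lemma shiftF_shiftF (k l : ℕ) (B : List (List ℕ)) : shiftF k (shiftF l B) = shiftF (k + l) B := by
  rw [shiftF, shiftF, map_map_map]
  exact map_map_congr fun ℓ _ => by simp only [Function.comp_apply]; omega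

lemma mergeBlocks_append_cons (A : List (List ℕ)) (a b : List ℕ) (B : List (List ℕ)) :
    mergeBlocks (A ++ [a]) (b :: B) = A ++ (a ++ b) :: B := by
  simp [mergeBlocks]

lemma mergeBlocks_cons {A : List (List ℕ)} (hA : A ≠ []) (a : List ℕ) (B : List (List ℕ)) :
    mergeBlocks (a :: A) B = a :: mergeBlocks A B := by
  obtain ⟨a', A, rfl⟩ := List.exists_cons_of_ne_nil hA
  simp [mergeBlocks]

lemma mergeBlocks_ne_nil (A B : List (List ℕ)) : mergeBlocks A B ≠ [] := by
  simp [mergeBlocks]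

lemma mergeBlocks_assoc {A B C : List (List ℕ)} (hA : A ≠ []) (hB : B ≠ []) (hC : C ≠ []) :
    mergeBlocks (mergeBlocks A B) C = mergeBlocks A (mergeBlocks B C) := by
  obtain ⟨b, B, rfl⟩ := List.exists_cons_of_ne_nil hB
  obtain ⟨c, C, rfl⟩ := List.exists_cons_of_ne_nil hC
  induction A with
  | nil => exact absurd rfl hA
  | cons a A ih =>
    have hsingle := mergeBlocks_append_cons []
    simp only [List.nil_append] at hsingle
    rcases eq_or_ne A [] with rfl | hA'
    · rcases eq_or_ne B [] with rfl | hB'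
      · simp [hsingle]
      · simp [hsingle, mergeBlocks_cons hB']
    · rw [mergeBlocks_cons hA', mergeBlocks_cons (mergeBlocks_ne_nil _ _), ih hA',
        mergeBlocks_cons hA']

lemma mergeBlocks_flatten (A B : List (List ℕ)) :
    (mergeBlocks A B).flatten = A.flatten ++ B.flatten := by
  rcases List.eq_nil_or_concat A with rfl | ⟨A, a, rfl⟩ <;> cases B <;> simp [mergeBlocks]

lemma map_mergeBlocks (f : ℕ → ℕ) (A B : List (List ℕ)) :
    (mergeBlocks A B).map (List.map f) =
      mergeBlocks (A.map (List.map f)) (B.map (List.map f)) := by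
  rcases List.eq_nil_or_concat A with rfl | ⟨A, a, rfl⟩ <;> cases B <;> simp [mergeBlocks]

lemma shiftF_mergeBlocks (k : ℕ) (A B : List (List ℕ)) :
    shiftF k (mergeBlocks A B) = mergeBlocks (shiftF k A) (shiftF k B) :=
  map_mergeBlocks _ A B

lemma length_flatten_mergeBlocks_shiftF {A B : List (List ℕ)} {a b : ℕ}
    (hA : A.flatten.length = a) (hB : B.flatten.length = b) (k : ℕ) :
    (mergeBlocks A (shiftF k B)).flatten.length = a + b := by
  rw [mergeBlocks_flatten, List.length_append, shiftF, length_flatten_map_map, hA, hB]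

lemma mergeBlocks_shiftF_assoc {A B C : List (List ℕ)} (hA : A ≠ []) (hB : B ≠ []) (hC : C ≠ [])
    (a b : ℕ) :
    mergeBlocks (mergeBlocks A (shiftF a B)) (shiftF (a + b) C) =
      mergeBlocks A (shiftF a (mergeBlocks B (shiftF b C))) := by
  rw [mergeBlocks_assoc hA (shiftF_ne_nil hB a) (shiftF_ne_nil hC _), shiftF_mergeBlocks,
    shiftF_shiftF]

lemma thetaW_thetaW (B : List (List ℕ)) : thetaW (thetaW B) = B := by
  simp [thetaW, List.map_reverse]

lemma thetaW_map (f : ℕ → ℕ) (B : List (List ℕ)) :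
    thetaW (B.map (List.map f)) = (thetaW B).map (List.map f) := by
  simp [thetaW, List.map_reverse]

lemma thetaW_flatten (B : List (List ℕ)) : (thetaW B).flatten = B.flatten.reverse := by
  rw [thetaW, List.reverse_flatten]

lemma thetaW_mergeBlocks {A B : List (List ℕ)} (hA : A ≠ []) (hB : B ≠ []) :
    thetaW (mergeBlocks A B) = mergeBlocks (thetaW B) (thetaW A) := by
  obtain ⟨A, a, rfl⟩ := (List.eq_nil_or_concat A).resolve_left hA
  obtain ⟨b, B, rfl⟩ := List.exists_cons_of_ne_nil hB
  have hθA : thetaW (A ++ [a]) = a.reverse :: thetaW A := by simp [thetaW]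
  have hθB : thetaW (b :: B) = thetaW B ++ [b.reverse] := by simp [thetaW]
  rw [List.concat_eq_append, mergeBlocks_append_cons, hθA, hθB, mergeBlocks_append_cons]
  simp [thetaW]

lemma thetaW_mergeBlocks_shiftF {A B : List (List ℕ)} (hA : A ≠ []) (hB : B ≠ []) (k : ℕ) :
    thetaW (mergeBlocks A (shiftF k B)) = mergeBlocks (shiftF k (thetaW B)) (thetaW A) := by
  rw [thetaW_mergeBlocks hA (shiftF_ne_nil hB k), shiftF, thetaW_map]
  rfl

end Words

section Relabel

variable {a b N : ℕ}

def LettersIn (B : List (List ℕ)) (k : ℕ) : Prop :=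
  ∀ ℓ ∈ B.flatten, 1 ≤ ℓ ∧ ℓ ≤ k

lemma IsLF.lettersIn {B : List (List ℕ)} (hB : IsLF B) : LettersIn B B.flatten.length := by
  intro ℓ hℓ
  have := List.mem_range'_1.mp (hB.2.mem_iff.mp hℓ)
  omega

lemma LettersIn.mergeBlocks_shiftF {A B : List (List ℕ)} (hA : LettersIn A a)
    (hB : LettersIn B b) : LettersIn (mergeBlocks A (shiftF a B)) (a + b) := by
  intro ℓ hℓ
  rw [mergeBlocks_flatten, List.mem_append, shiftF, flatten_map_map, List.mem_map] at hℓ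
  rcases hℓ with hℓ | ⟨ℓ, hℓ, rfl⟩
  · have := hA ℓ hℓ
    omega
  · have := hB ℓ hℓ
    omega

lemma LettersIn.thetaW {B : List (List ℕ)} {k : ℕ} (hB : LettersIn B k) :
    LettersIn (thetaW B) k :=
  fun ℓ hℓ => hB ℓ (by rwa [thetaW_flatten, List.mem_reverse] at hℓ)

lemma relabel_mul (α β : Perm (Fin N)) (ℓ : ℕ) :
    relabel α (relabel β ℓ) = relabel (α * β) ℓ := by
  unfold relabel
  by_cases hℓ : ℓ - 1 < N <;> simp [hℓ]

lemma relabel_one {ℓ : ℕ} (hℓ : 1 ≤ ℓ) : relabel (1 : Perm (Fin N)) ℓ = ℓ := by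
  unfold relabel
  split_ifs
  · simp only [Perm.coe_one, id_eq]
    omega
  · rfl

lemma relabel_blockSum_of_lt (h : a + b = N) (q : Perm (Fin a) × Perm (Fin b)) {ℓ : ℕ}
    (hℓ : ℓ - 1 < a) : relabel (blockSum h q) ℓ = relabel q.1 ℓ := by
  rw [relabel, relabel, dif_pos (by omega), dif_pos hℓ, blockSum_apply_of_lt h q (by exact hℓ)]

lemma relabel_blockSum_add (h : a + b = N) (q : Perm (Fin a) × Perm (Fin b)) {ℓ : ℕ}
    (hℓ : 1 ≤ ℓ) : relabel (blockSum h q) (ℓ + a) = relabel q.2 ℓ + a := by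
  unfold relabel
  by_cases hℓb : ℓ - 1 < b
  · rw [dif_pos (by omega), dif_pos hℓb, blockSum_apply_of_le h q (by simp; omega)]
    simp only [show ℓ + a - 1 - a = ℓ - 1 by omega]
    omega
  · rw [dif_neg (by omega), dif_neg hℓb]

lemma relabel_blockSwap_of_le (h : a + b = N) {ℓ : ℕ} (hℓ : 1 ≤ ℓ ∧ ℓ ≤ a) :
    relabel (blockSwap h) ℓ = ℓ + b := by
  rw [relabel, dif_pos (by omega), blockSwap_apply_of_lt h (by simp; omega)]
  simp
  omega

lemma relabel_blockSwap_add (h : a + b = N) {ℓ : ℕ} (hℓ : 1 ≤ ℓ ∧ ℓ ≤ b) :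
    relabel (blockSwap h) (ℓ + a) = ℓ := by
  rw [relabel, dif_pos (by omega), blockSwap_apply_of_le h (by simp; omega)]
  simp
  omega

lemma relabelF_mul (α β : Perm (Fin N)) (B : List (List ℕ)) :
    relabelF α (relabelF β B) = relabelF (α * β) B := by
  rw [relabelF, relabelF, map_map_map]
  exact map_map_congr fun ℓ _ => relabel_mul α β ℓ

lemma relabelF_one {B : List (List ℕ)} {k : ℕ} (hB : LettersIn B k) :
    relabelF (1 : Perm (Fin N)) B = B :=
  map_map_eq_self fun ℓ hℓ => relabel_one (hB ℓ hℓ).1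

lemma length_flatten_relabelF (α : Perm (Fin N)) (B : List (List ℕ)) :
    (relabelF α B).flatten.length = B.flatten.length :=
  length_flatten_map_map _ B

lemma thetaW_relabelF (α : Perm (Fin N)) (B : List (List ℕ)) :
    thetaW (relabelF α B) = relabelF α (thetaW B) :=
  thetaW_map _ B

lemma relabelF_blockSum_mergeBlocks (h : a + b = N) (q : Perm (Fin a) × Perm (Fin b))
    {A B : List (List ℕ)} (hA : LettersIn A a) (hB : LettersIn B b) :
    relabelF (blockSum h q) (mergeBlocks A (shiftF a B)) =
      mergeBlocks (relabelF q.1 A) (shiftF a (relabelF q.2 B)) := by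
  rw [relabelF, map_mergeBlocks]
  congr 1
  · exact map_map_congr fun ℓ hℓ => relabel_blockSum_of_lt h q (by have := hA ℓ hℓ; omega)
  · rw [shiftF, relabelF, shiftF, map_map_map, map_map_map]
    exact map_map_congr fun ℓ hℓ => relabel_blockSum_add h q (hB ℓ hℓ).1

lemma relabelF_blockSwap_mergeBlocks (h : a + b = N) {A B : List (List ℕ)} (hA : LettersIn A b)
    (hB : LettersIn B a) :
    relabelF (blockSwap h) (mergeBlocks (shiftF a A) B) = mergeBlocks A (shiftF b B) := by
  rw [relabelF, map_mergeBlocks]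
  congr 1
  · rw [shiftF, map_map_map]
    exact map_map_eq_self fun ℓ hℓ => relabel_blockSwap_add h (hA ℓ hℓ)
  · exact map_map_congr fun ℓ hℓ => relabel_blockSwap_of_le h (hB ℓ hℓ)

end Relabel

section Algebra

lemma mulCLF_single_single (A B : List (List ℕ)) :
    mulCLF (Finsupp.single A 1) (Finsupp.single B 1) = shuffleMulW A B := by
  simp [mulCLF]

lemma mulCLF_sum_left {ι : Type*} (s : Finset ι) (x : ι → CLF) (y : CLF) :
    mulCLF (∑ i ∈ s, x i) y = ∑ i ∈ s, mulCLF (x i) y :=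
  (Finsupp.sum_finsetSum_index (by simp) fun _ _ _ => by
    simp only [add_mul, add_smul, Finsupp.sum_add]).symm

lemma mulCLF_sum_right {ι : Type*} (x : CLF) (s : Finset ι) (y : ι → CLF) :
    mulCLF x (∑ i ∈ s, y i) = ∑ i ∈ s, mulCLF x (y i) := by
  have h : ∀ F a, ((∑ i ∈ s, y i).sum fun G b => (a * b) • shuffleMulW F G) =
      ∑ i ∈ s, (y i).sum fun G b => (a * b) • shuffleMulW F G := fun F a =>
    (Finsupp.sum_finsetSum_index (by simp) fun _ _ _ => by simp only [mul_add, add_smul]).symm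
  simp only [mulCLF, h]
  exact Finset.sum_comm

lemma theta_single (B : List (List ℕ)) (c : ℂ) :
    theta (Finsupp.single B c) = Finsupp.single (thetaW B) c :=
  Finsupp.mapDomain_single

lemma theta_sum {ι : Type*} (s : Finset ι) (x : ι → CLF) :
    theta (∑ i ∈ s, x i) = ∑ i ∈ s, theta (x i) :=
  Finsupp.mapDomain_finsetSum

lemma theta_theta (x : CLF) : theta (theta x) = x := by
  unfold theta
  rw [← Finsupp.mapDomain_comp, show thetaW ∘ thetaW = id from funext thetaW_thetaW,
    Finsupp.mapDomain_id]

lemma shuffleMulW_eq {A B : List (List ℕ)} {n m N : ℕ} (hA : A.flatten.length = n)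
    (hB : B.flatten.length = m) (h : n + m = N) :
    shuffleMulW A B =
      ∑ η ∈ shuffles N n, Finsupp.single (relabelF η (mergeBlocks A (shiftF n B))) 1 := by
  subst hA hB h
  rfl

end Algebra

section ShuffleAlgebra

variable {F G H : List (List ℕ)} {n m p : ℕ}

lemma mulCLF_shuffleMulW_single (hF : F.flatten.length = n) (hG : G.flatten.length = m)
    (hH : H.flatten.length = p) (hFl : LettersIn F n) (hGl : LettersIn G m)
    (hHl : LettersIn H p) :
    mulCLF (shuffleMulW F G) (Finsupp.single H 1) =
      ∑ α ∈ shuffles3 (n + m + p) n m, Finsupp.single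
        (relabelF α (mergeBlocks (mergeBlocks F (shiftF n G)) (shiftF (n + m) H))) 1 := by
  rw [sum_shuffles3_eq_sum_left rfl, shuffleMulW_eq hF hG rfl, mulCLF_sum_left]
  refine Finset.sum_congr rfl fun η _ => ?_
  rw [mulCLF_single_single, shuffleMulW_eq (by rw [length_flatten_relabelF,
    length_flatten_mergeBlocks_shiftF hF hG]) hH rfl]
  refine Finset.sum_congr rfl fun β _ => ?_
  rw [← relabelF_mul, relabelF_blockSum_mergeBlocks rfl _ (hFl.mergeBlocks_shiftF hGl) hHl,
    relabelF_one hHl]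

lemma mulCLF_single_shuffleMulW (hF : F.flatten.length = n) (hG : G.flatten.length = m)
    (hH : H.flatten.length = p) (hFl : LettersIn F n) (hGl : LettersIn G m)
    (hHl : LettersIn H p) :
    mulCLF (Finsupp.single F 1) (shuffleMulW G H) =
      ∑ α ∈ shuffles3 (n + m + p) n m, Finsupp.single
        (relabelF α (mergeBlocks F (shiftF n (mergeBlocks G (shiftF m H))))) 1 := by
  have h : n + (m + p) = n + m + p := (Nat.add_assoc n m p).symm
  rw [sum_shuffles3_eq_sum_right h, shuffleMulW_eq hG hH rfl, mulCLF_sum_right]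
  refine Finset.sum_congr rfl fun γ _ => ?_
  rw [mulCLF_single_single, shuffleMulW_eq hF (by rw [length_flatten_relabelF,
    length_flatten_mergeBlocks_shiftF hG hH]) h]
  refine Finset.sum_congr rfl fun δ _ => ?_
  rw [← relabelF_mul, relabelF_blockSum_mergeBlocks h _ hFl (hGl.mergeBlocks_shiftF hHl),
    relabelF_one hFl]

theorem shuffleMulW_assoc (hF : IsLF F) (hG : IsLF G) (hH : IsLF H) :
    mulCLF (shuffleMulW F G) (Finsupp.single H 1) =
      mulCLF (Finsupp.single F 1) (shuffleMulW G H) := by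
  rw [mulCLF_shuffleMulW_single rfl rfl rfl hF.lettersIn hG.lettersIn hH.lettersIn,
    mulCLF_single_shuffleMulW rfl rfl rfl hF.lettersIn hG.lettersIn hH.lettersIn,
    mergeBlocks_shiftF_assoc hF.1 hG.1 hH.1]

theorem theta_shuffleMulW (hF : IsLF F) (hG : IsLF G) :
    theta (shuffleMulW F G) = shuffleMulW (thetaW G) (thetaW F) := by
  have hlen : ∀ B : List (List ℕ), (thetaW B).flatten.length = B.flatten.length := fun B => by
    rw [thetaW_flatten, List.length_reverse]
  rw [shuffleMulW_eq rfl rfl rfl, shuffleMulW_eq (hlen G) (hlen F) (Nat.add_comm _ _), theta_sum]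
  refine (Finset.sum_equiv (Equiv.mulRight (blockSwap rfl)) (fun η => ?_) fun η _ => ?_).symm
  · rw [mem_shuffles, mem_shuffles, Equiv.coe_mulRight, isShuffle_mul_blockSwap_iff]
  · rw [theta_single, Equiv.coe_mulRight, thetaW_relabelF, thetaW_mergeBlocks_shiftF hF.1 hG.1,
      ← relabelF_mul, relabelF_blockSwap_mergeBlocks rfl hG.lettersIn.thetaW hF.lettersIn.thetaW]

end ShuffleAlgebra

/-- the shuffle product `⧢` on `ℂLF` is associative, the horizontal mirror
map `θ` is an involution (`θ ∘ θ = id` on `ℂLF`), and `θ` is an antiautomorphism of the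
shuffle algebra: `θ(f ⧢ g) = θ(g) ⧢ θ(f)` for all levelled forests `f` and `g`. -/
theorem CLF_shuffle_algebra_involutive :
    (∀ F G H : List (List ℕ), IsLF F → IsLF G → IsLF H →
      mulCLF (mulCLF (Finsupp.single F 1) (Finsupp.single G 1)) (Finsupp.single H 1) =
        mulCLF (Finsupp.single F 1) (mulCLF (Finsupp.single G 1) (Finsupp.single H 1))) ∧
    (∀ x : CLF, theta (theta x) = x) ∧
    (∀ F G : List (List ℕ), IsLF F → IsLF G →
      theta (mulCLF (Finsupp.single F 1) (Finsupp.single G 1)) =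
        mulCLF (theta (Finsupp.single G 1)) (theta (Finsupp.single F 1))) := by
  refine ⟨fun F G H hF hG hH => ?_, theta_theta, fun F G hF hG => ?_⟩
  · rw [mulCLF_single_single, mulCLF_single_single]
    exact shuffleMulW_assoc hF hG hH
  · rw [mulCLF_single_single, theta_single, theta_single, mulCLF_single_single]
    exact theta_shuffleMulW hF hG
end

section
/- Chen decomposition of simplex integrals: let E be a complex Banach space, n ≥ 1, g : ℝ^n → E continuous, and s ≤ u ≤ t real numbers. Then I^n_{s,t}(g) = Σ_{p=0}^{n} I^p_{u,t}((t_1,…,t_p) ↦ I^{n−p}_{s,u}((t_{p+1},…,t_n) ↦ g(t_1,…,t_n))). -/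
/-!
Induction on `n`. Split the outer integral `∫_s^t` at `u`: the part over `[s, u]` is
`I^n_{s,u}(g)`, the `p = 0` term. On `[u, t]` expand the integrand `I^{n-1}_{s,r}(g(r, ·))` by
the induction hypothesis with `r` in place of `t`; integrating the `p`-th term in `r` over
`[u, t]` gives the `(p + 1)`-st term for `n`. Continuity of simplex integrals in their
parameters and upper limit justifies splitting the integral and exchanging `∫` and `Σ`.
-/

/-- The iterated integral `I^n_{s,t}(g) = ∫_{Δ^n_{s,t}} g(t_1,…,t_n) dt_1⋯dt_n` over the
simplex `Δ^n_{s,t} = {s < t_n < ⋯ < t_1 < t}`, written as a nested Bochner integral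
`∫_s^t ∫_s^{t_1} ⋯ ∫_s^{t_{n−1}} g(t_1,…,t_n) dt_n ⋯ dt_1`.  By convention
`I^0_{s,t}(g) = g` (the value of the constant `g`). -/
noncomputable def simplexIntegral {E : Type*} [NormedAddCommGroup E] [NormedSpace ℝ E] :
    (n : ℕ) → ℝ → ℝ → ((Fin n → ℝ) → E) → E
  | 0, _, _, g => g Fin.elim0
  | n + 1, s, t, g => ∫ r in s..t, simplexIntegral n s r (fun ts => g (Fin.cons r ts))

open MeasureTheory intervalIntegral

section

variable {E : Type*} [NormedAddCommGroup E] [NormedSpace ℝ E]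

theorem continuous_parametric_intervalIntegral_of_continuous_bounds {X : Type*}
    [TopologicalSpace X] {μ : Measure ℝ} [IsLocallyFiniteMeasure μ] [NullSingletonClass μ]
    {f : X → ℝ → E} (hf : Continuous f.uncurry) {a b : X → ℝ} (ha : Continuous a)
    (hb : Continuous b) :
    Continuous fun x => ∫ t in a x..b x, f x t ∂μ := by
  have hint (x : X) (c d : ℝ) : IntervalIntegrable (f x) μ c d :=
    (hf.uncurry_left x).intervalIntegrable _ _
  have hsplit : (fun x => ∫ t in a x..b x, f x t ∂μ) =
      fun x => (∫ t in 0..b x, f x t ∂μ) - ∫ t in 0..a x, f x t ∂μ :=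
    funext fun x => (integral_interval_sub_left (hint x 0 _) (hint x 0 _)).symm
  rw [hsplit]
  exact (continuous_parametric_intervalIntegral_of_continuous hf hb).sub
    (continuous_parametric_intervalIntegral_of_continuous hf ha)

theorem continuous_parametric_simplexIntegral (n : ℕ) {X : Type*} [TopologicalSpace X]
    {G : X → (Fin n → ℝ) → E} (hG : Continuous G.uncurry) {a b : X → ℝ} (ha : Continuous a)
    (hb : Continuous b) : Continuous fun x => simplexIntegral n (a x) (b x) (G x) := by
  induction n generalizing X with
  | zero => exact hG.comp (continuous_id.prodMk continuous_const)
  | succ n ih =>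
    refine continuous_parametric_intervalIntegral_of_continuous_bounds ?_ ha hb
    refine ih (X := X × ℝ) ?_ ha.fst' continuous_snd
    exact hG.comp (continuous_fst.fst.prodMk (continuous_fst.snd.finCons continuous_snd))

/-- The term `I^p_{u,t}(I^q_{s,u} g)` of Chen's decomposition of `I^n_{s,t} g`. -/
noncomputable def chenTerm {n : ℕ} (g : (Fin n → ℝ) → E) (s u t : ℝ) (p q : ℕ)
    (h : p + q = n) : E :=
  simplexIntegral p u t fun ts =>
    simplexIntegral q s u fun ws => g fun i => Fin.append ts ws (Fin.cast h.symm i)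

theorem chenTerm_congr {n : ℕ} (g : (Fin n → ℝ) → E) (s u t : ℝ) {p q q' : ℕ}
    (h : p + q = n) (h' : p + q' = n) (hq : q = q') :
    chenTerm g s u t p q h = chenTerm g s u t p q' h' := by
  subst hq; rfl

theorem chenTerm_zero_left {n : ℕ} (g : (Fin n → ℝ) → E) (s u t : ℝ) (h : 0 + n = n) :
    chenTerm g s u t 0 n h = simplexIntegral n s u g := by
  simp [chenTerm, simplexIntegral, Fin.elim0_append]

theorem chenTerm_succ_left {n : ℕ} (g : (Fin (n + 1) → ℝ) → E) (s u t : ℝ) {p q : ℕ}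
    (h : p + q = n) :
    chenTerm g s u t (p + 1) q (by rw [Nat.add_right_comm, h]) =
      ∫ r in u..t, chenTerm (fun x => g (Fin.cons r x)) s u r p q h := by
  subst h
  simp [chenTerm, simplexIntegral, Fin.append_cons]

theorem continuous_parametric_chenTerm {n : ℕ} {X : Type*} [TopologicalSpace X]
    {G : X → (Fin n → ℝ) → E} (hG : Continuous G.uncurry) (s u : ℝ) {t : X → ℝ}
    (ht : Continuous t) (p q : ℕ) (h : p + q = n) :
    Continuous fun x => chenTerm (G x) s u (t x) p q h := by
  refine continuous_parametric_simplexIntegral p ?_ continuous_const ht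
  refine continuous_parametric_simplexIntegral q ?_ continuous_const continuous_const
  have happend : Continuous fun y : ((X × (Fin p → ℝ)) × (Fin q → ℝ)) => Fin.append y.1.2 y.2 :=
    (Fin.appendHomeomorph p q).continuous.comp (continuous_fst.snd.prodMk continuous_snd)
  exact hG.comp
    (continuous_fst.fst.prodMk (continuous_pi fun i => (continuous_apply _).comp happend))

theorem simplexIntegral_eq_sum_chenTerm (n : ℕ) (g : (Fin n → ℝ) → E) (hg : Continuous g)
    (s u t : ℝ) :
    simplexIntegral n s t g = ∑ p : Fin (n + 1),
      chenTerm g s u t p (n - p) (Nat.add_sub_cancel' (Nat.lt_succ_iff.mp p.isLt)) := by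
  induction n generalizing t with
  | zero =>
    rw [Fin.sum_univ_one]
    exact (chenTerm_zero_left g s u t _).symm
  | succ n ih =>
    have hslice : Continuous fun q : ℝ × (Fin n → ℝ) => g (Fin.cons q.1 q.2) := by fun_prop
    have hA : Continuous fun r => simplexIntegral n s r fun x => g (Fin.cons r x) :=
      continuous_parametric_simplexIntegral n hslice continuous_const continuous_id
    have hterm (p : Fin (n + 1)) : Continuous fun r =>
        chenTerm (fun x => g (Fin.cons r x)) s u r p (n - p) (Nat.add_sub_cancel' p.is_le) :=
      continuous_parametric_chenTerm hslice s u continuous_id _ _ _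
    calc simplexIntegral (n + 1) s t g
        = (∫ r in s..u, simplexIntegral n s r fun x => g (Fin.cons r x)) +
            ∫ r in u..t, simplexIntegral n s r fun x => g (Fin.cons r x) :=
          (integral_add_adjacent_intervals (hA.intervalIntegrable _ _)
            (hA.intervalIntegrable _ _)).symm
      _ = chenTerm g s u t 0 (n + 1) (zero_add _) + ∑ p : Fin (n + 1),
            ∫ r in u..t, chenTerm (fun x => g (Fin.cons r x)) s u r p (n - p)
              (Nat.add_sub_cancel' p.is_le) := by
          rw [chenTerm_zero_left, ← integral_finsetSum fun p _ => (hterm p).intervalIntegrable _ _]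
          congr 1
          exact integral_congr fun r _ => ih _ (hg.comp (continuous_const.finCons continuous_id)) r
      _ = chenTerm g s u t 0 (n + 1) (zero_add _) + ∑ p : Fin (n + 1),
            chenTerm g s u t (p + 1) (n - p) (by omega) :=
          congrArg _ (Finset.sum_congr rfl fun p _ => (chenTerm_succ_left g s u t _).symm)
      _ = _ := by
          rw [Fin.sum_univ_succ (n := n + 1)]
          congr 1
          exact Finset.sum_congr rfl fun p _ => chenTerm_congr _ _ _ _ _ _ (by simp)

end

theorem simplexIntegral_chen_general {E : Type*} [NormedAddCommGroup E] [NormedSpace ℂ E]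
    (n : ℕ) (g : (Fin n → ℝ) → E) (hg : Continuous g) (s u t : ℝ) :
    simplexIntegral n s t g =
      ∑ p : Fin (n + 1),
        simplexIntegral (p : ℕ) u t (fun ts =>
          simplexIntegral (n - (p : ℕ)) s u (fun ws =>
            g (fun i => Fin.append ts ws
              (Fin.cast (Nat.add_sub_cancel' (Nat.lt_succ_iff.mp p.isLt)).symm i)))) :=
  simplexIntegral_eq_sum_chenTerm n g hg s u t

/-- Chen decomposition of simplex integrals: for a complex Banach space
`E`, `n ≥ 1`, a continuous `g : ℝ^n → E` and `s ≤ u ≤ t`,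
`I^n_{s,t}(g) = Σ_{p=0}^{n} I^p_{u,t}((t_1,…,t_p) ↦
  I^{n−p}_{s,u}((t_{p+1},…,t_n) ↦ g(t_1,…,t_n)))`. -/
theorem simplexIntegral_chen {E : Type*} [NormedAddCommGroup E] [NormedSpace ℂ E]
    [CompleteSpace E] (n : ℕ) (hn : 1 ≤ n) (g : (Fin n → ℝ) → E) (hg : Continuous g)
    (s u t : ℝ) (hsu : s ≤ u) (hut : u ≤ t) :
    simplexIntegral n s t g =
      ∑ p : Fin (n + 1),
        simplexIntegral (p : ℕ) u t (fun ts =>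
          simplexIntegral (n - (p : ℕ)) s u (fun ws =>
            g (fun i => Fin.append ts ws
              (Fin.cast (Nat.add_sub_cancel' (Nat.lt_succ_iff.mp p.isLt)).symm i)))) :=
  simplexIntegral_chen_general n g hg s u t
end

section
/- The star involution is antimultiplicative for the shuffle product: let A be a C*-algebra and m : A^p → A, m' : A^q → A continuous multilinear maps. Then ⋆(m ⧢ m') = (⋆m') ⧢ (⋆m) as continuous multilinear maps A^{p+q} → A. -/
/-- The shuffle product of two (multilinear) maps `m : A^p → A`, `m' : A^q → A`. -/
def shuffleF {A : Type*} [NormedRing A] (p q : ℕ)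
    (m : (Fin p → A) → A) (m' : (Fin q → A) → A) : (Fin (p + q) → A) → A :=
  fun X => ∑ η ∈ shuffles (p + q) p,
    m (fun i => X (η (Fin.castAdd q i))) * m' (fun j => X (η (Fin.natAdd p j)))

/-- The star of a map `m : A^p → A`: `(⋆m)(X_1,…,X_p) = (m(X_p^*, …, X_1^*))^*`. -/
def starF {A : Type*} [NormedRing A] [StarRing A] (n : ℕ)
    (m : (Fin n → A) → A) : (Fin n → A) → A :=
  fun X => star (m fun i => star (X i.rev))

/-- Conjugation of a permutation by reversal (and index cast). -/
def shufConj (p q : ℕ) (η : Equiv.Perm (Fin (p + q))) : Equiv.Perm (Fin (q + p)) :=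
  (finCongr (Nat.add_comm p q)).permCongr (Fin.revPerm.trans (η.trans Fin.revPerm))

lemma shufConj_apply (p q : ℕ) (η : Equiv.Perm (Fin (p + q))) (k : Fin (q + p)) :
    shufConj p q η k =
      Fin.cast (Nat.add_comm p q) (Fin.rev (η (Fin.rev (Fin.cast (Nat.add_comm q p) k)))) := by
  rfl

lemma shufConj_shufConj (p q : ℕ) (η : Equiv.Perm (Fin (p + q))) :
    shufConj q p (shufConj p q η) = η := by
  ext k
  rw [shufConj_apply, shufConj_apply]
  have h1 : Fin.rev (Fin.cast (Nat.add_comm q p) (Fin.rev (Fin.cast (Nat.add_comm p q) k))) = k := by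
    apply Fin.ext; simp [Fin.val_rev]; omega
  rw [h1]
  simp [Fin.val_rev]
  have := (η k).isLt
  omega

lemma shufConj_isShuffle (p q : ℕ) (η : Equiv.Perm (Fin (p + q))) (h : IsShuffle p η) :
    IsShuffle q (shufConj p q η) := by
  intro i j hij hcond
  rw [shufConj_apply, shufConj_apply]
  rw [Fin.lt_def] at hij ⊢
  simp only [Fin.coe_cast, Fin.val_rev]
  have hi := i.isLt
  have hj := j.isLt
  set a : Fin (p + q) := Fin.rev (Fin.cast (Nat.add_comm q p) j) with ha
  set b : Fin (p + q) := Fin.rev (Fin.cast (Nat.add_comm q p) i) with hb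
  have hav : (a : ℕ) = p + q - 1 - (j : ℕ) := by simp [ha, Fin.val_rev]; omega
  have hbv : (b : ℕ) = p + q - 1 - (i : ℕ) := by simp [hb, Fin.val_rev]; omega
  have hab : a < b := by rw [Fin.lt_def]; omega
  have key : η a < η b := by
    apply h a b hab
    rcases hcond with hc | hc
    · right; omega
    · left; omega
  rw [Fin.lt_def] at key
  have h1 := (η a).isLt
  have h2 := (η b).isLt
  omega

lemma shufConj_mem (p q : ℕ) (η : Equiv.Perm (Fin (p + q))) (h : η ∈ shuffles (p + q) p) :
    shufConj p q η ∈ shuffles (q + p) q := by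
  rw [shuffles, Finset.mem_filter] at h ⊢
  exact ⟨Finset.mem_univ _, shufConj_isShuffle p q η h.2⟩

/-- on a C*-algebra `A`, the star involution is antimultiplicative for the
shuffle product of continuous multilinear maps: `⋆(m ⧢ m') = (⋆m') ⧢ (⋆m)` as maps
`A^{p+q} → A` (the two sides being identified along `q + p = p + q`). -/
theorem starF_shuffleF {A : Type*} [NormedRing A] [StarRing A] [CStarRing A]
    [NormedAlgebra ℂ A] [StarModule ℂ A] [CompleteSpace A] (p q : ℕ)
    (m : ContinuousMultilinearMap ℂ (fun _ : Fin p => A) A)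
    (m' : ContinuousMultilinearMap ℂ (fun _ : Fin q => A) A) :
    starF (p + q) (shuffleF p q ⇑m ⇑m') =
      fun X : Fin (p + q) → A =>
        shuffleF q p (starF q ⇑m') (starF p ⇑m)
          (fun i => X (Fin.cast (Nat.add_comm q p) i)) := by
  funext X
  simp only [starF, shuffleF, star_sum, star_mul]
  refine Finset.sum_nbij' (i := fun η => shufConj p q η) (j := fun σ => shufConj q p σ)
    (fun η hη => shufConj_mem p q η hη) (fun σ hσ => shufConj_mem q p σ hσ)
    (fun η _ => shufConj_shufConj p q η) (fun σ _ => shufConj_shufConj q p σ) ?_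
  intro η hη
  have e1 : ∀ j : Fin q,
      (Fin.cast (Nat.add_comm q p) (Fin.castAdd p (Fin.rev j))).rev = Fin.natAdd p j := by
    intro j
    apply Fin.ext
    have := j.isLt
    simp [Fin.val_rev]
    omega
  have e2 : ∀ i : Fin p,
      (Fin.cast (Nat.add_comm q p) (Fin.natAdd q (Fin.rev i))).rev = Fin.castAdd q i := by
    intro i
    apply Fin.ext
    have := i.isLt
    simp [Fin.val_rev]
    omega
  have e3 : ∀ w : Fin (p + q),
      Fin.cast (Nat.add_comm q p) (Fin.cast (Nat.add_comm p q) w.rev) = w.rev := by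
    intro w; apply Fin.ext; simp
  congr 1
  · apply congrArg
    apply congrArg
    funext j
    rw [shufConj_apply, e1 j, e3]
  · apply congrArg
    apply congrArg
    funext i
    rw [shufConj_apply, e2 i, e3]
end

section
/- Chen relation for the non-commutative signature operators: let A be a complex unital Banach algebra and X : ℝ → A continuously differentiable. For every levelled forest f with n = ‖f‖ and k = nt(f), every continuous (n+k−1)-linear map m : A^{n+k−1} → A, and all reals s ≤ u ≤ t, one has 𝒳_{s,t}(f)(m) = Σ_{p=0}^{n} 𝒳_{u,t}(f_-^p)(𝒳_{s,u}(f_+^p)(m)) as continuous (k−1)-linear maps A^{k−1} → A. -/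
/-- The lower part `f_-^p` of the horizontal splitting at level `p`. -/
def lowerW (p : ℕ) (B : List (List ℕ)) : List (List ℕ) :=
  B.map (List.filter (fun a => decide (a ≤ p)))

/-- Split a block at its letters `≤ p` (removed letters acting as separators, empty
segments kept), subtracting `p` from the remaining letters. -/
def splitUpper (p : ℕ) : List ℕ → List (List ℕ)
  | [] => [[]]
  | a :: l =>
    if a ≤ p then [] :: splitUpper p l
    else
      match splitUpper p l with
      | [] => [[a - p]]
      | s :: rest => ((a - p) :: s) :: rest

/-- The upper part `f_+^p` of the horizontal splitting at level `p`. -/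
def upperW (p : ℕ) (B : List (List ℕ)) : List (List ℕ) :=
  (B.map (splitUpper p)).flatten

/-- The `N`-tuple `(Z_1,…,Z_N)` of Definition of the signature operators: the letters of
each block are replaced by the values `v` (in our use, `ℓ ↦ X'(t_ℓ)`), and the argument
`Y_j` is placed in the slot `ℓ_j` between the `j`-th and `(j+1)`-th blocks. -/
def zList {A : Type*} [One A] (v : ℕ → A) : List (List ℕ) → List A → List A
  | [], _ => []
  | [b], _ => b.map v
  | b :: bs, ys => b.map v ++ (ys.headD 1 :: zList v bs ys.tail)

/-- The signature operator `𝒳_{s,t}(f)(m)` applied to the `(nt(f)−1)`-tuple `Ys`: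
`(𝒳_{s,t}(f)(m))(Y_1,…,Y_{k−1}) = I^{‖f‖}_{s,t}((t_1,…,t_n) ↦ m(Z_1,…,Z_N))`, where
`Z_{ℓ_j} = Y_j` on the between-tree slots and `Z_{slot(r)} = X'(t_{σ(r)})` on the
within-tree slots (`σ(r)` being the `r`-th letter of the forest word). -/
noncomputable def sigApply {A : Type*} [NormedRing A] [NormedAlgebra ℂ A]
    (X : ℝ → A) (B : List (List ℕ)) (s t : ℝ) {N : ℕ}
    (m : (Fin N → A) → A) (Ys : List A) : A :=
  simplexIntegral B.flatten.length s t fun ts =>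
    m fun i =>
      (zList (fun ℓ =>
          if h : ℓ - 1 < B.flatten.length then deriv X (ts ⟨ℓ - 1, h⟩) else 1) B Ys).getD
        (i : ℕ) 1

/-!
Cutting the simplex `s < t_n < ⋯ < t_1 < t` at the level `u` decomposes it, up to null sets,
into the products `Δ^p_{u,t} × Δ^{n-p}_{s,u}`, `0 ≤ p ≤ n`, according to how many times lie
above `u`; for iterated integrals this follows by splitting the outermost integral at `u` and
inducting on `n`. In the signature integrand the time `t_ℓ` is attached to the letter `ℓ`, so
on the `p`-th piece the times in `[u, t]` are those of the letters `≤ p`, i.e. of the lower part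
`f_-^p`, and those in `[s, u]` belong to the upper part `f_+^p`. The remaining point is
combinatorial: feeding the tuple of `f_-^p` into the between-tree slots of the tuple of `f_+^p`
rebuilds the tuple of `f`, because the letters `≤ p` removed from a block are exactly the
separators of `f_+^p`.
-/

lemma List.ofFn_getD {α : Type*} {L : List α} {q : ℕ} (h : L.length = q) (d : α) :
    List.ofFn (fun i : Fin q => L.getD i d) = L := by
  subst h
  simp [List.getD_eq_getElem?_getD]

section FinJoin

variable {α : Type*}

def finJoin (p n : ℕ) (a : Fin p → α) (b : Fin (n - p) → α) : Fin n → α :=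
  fun i => if h : (i : ℕ) < p then a ⟨i, h⟩ else b ⟨i - p, by omega⟩

lemma finJoin_apply_of_lt {p n : ℕ} (a : Fin p → α) (b : Fin (n - p) → α)
    {i : ℕ} (hi : i < n) (hip : i < p) : finJoin p n a b ⟨i, hi⟩ = a ⟨i, hip⟩ := by
  simp [finJoin, hip]

lemma finJoin_apply_of_le {p n : ℕ} (a : Fin p → α) (b : Fin (n - p) → α)
    {i : ℕ} (hi : i < n) (hpi : p ≤ i) :
    finJoin p n a b ⟨i, hi⟩ = b ⟨i - p, by omega⟩ := by
  simp [finJoin, Nat.not_lt.mpr hpi]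

lemma finJoin_zero (n : ℕ) (a : Fin 0 → α) (b : Fin (n - 0) → α) :
    finJoin 0 n a b = b := by
  ext i
  simp [finJoin]

lemma finJoin_cons (p n : ℕ) (r : α) (a : Fin p → α)
    (b : Fin (n + 1 - (p + 1)) → α) :
    finJoin (p + 1) (n + 1) (Fin.cons r a) b
      = Fin.cons r (finJoin p n a fun i => b (Fin.cast (by omega) i)) := by
  ext j
  refine Fin.cases ?_ (fun j => ?_) j
  · simp [finJoin]
  · by_cases hj : (j : ℕ) < p
    · simp only [finJoin, Fin.cons_succ, Fin.val_succ, add_lt_add_iff_right, dif_pos hj]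
      exact Fin.cons_succ (α := fun _ => α) r a ⟨j, hj⟩
    · simp only [finJoin, Fin.cons_succ, Fin.val_succ, add_lt_add_iff_right, dif_neg hj]
      congr 1
      ext
      simp only [Fin.val_cast]
      omega

@[fun_prop]
lemma continuous_finJoin [TopologicalSpace α] (p n : ℕ) :
    Continuous fun x : (Fin p → α) × (Fin (n - p) → α) => finJoin p n x.1 x.2 := by
  refine continuous_pi fun i => ?_
  by_cases h : (i : ℕ) < p
  · simp only [finJoin, dif_pos h]
    fun_prop
  · simp only [finJoin, dif_neg h]
    fun_prop

end FinJoin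

section SimplexIntegral

variable {E : Type*} [NormedAddCommGroup E] [NormedSpace ℝ E]

lemma simplexIntegral_congr_dim {m m' : ℕ} (h : m = m') (s t : ℝ) (g : (Fin m → ℝ) → E)
    (g' : (Fin m' → ℝ) → E) (hg : ∀ x, g (fun i => x (Fin.cast h i)) = g' x) :
    simplexIntegral m s t g = simplexIntegral m' s t g' := by
  subst h
  exact congrArg _ (funext hg)

lemma continuous_simplexIntegral (n : ℕ) {X : Type*} [TopologicalSpace X]
    {g : X → (Fin n → ℝ) → E} (hg : Continuous (Function.uncurry g)) (s : ℝ) {b : X → ℝ}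
    (hb : Continuous b) : Continuous fun x => simplexIntegral n s (b x) (g x) := by
  induction n generalizing X with
  | zero => exact hg.comp (continuous_id.prodMk continuous_const)
  | succ n ih =>
    have hcons : Continuous fun q : X × ℝ => simplexIntegral n s q.2 fun ts =>
        g q.1 (Fin.cons q.2 ts) :=
      ih (g := fun q ts => g q.1 (Fin.cons q.2 ts)) (by fun_prop) continuous_snd
    exact intervalIntegral.continuous_parametric_intervalIntegral_of_continuous hcons hb

theorem simplexIntegral_chen_s19 (n : ℕ) {g : (Fin n → ℝ) → E} (hg : Continuous g) (s u t : ℝ) :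
    simplexIntegral n s t g = ∑ p ∈ Finset.range (n + 1),
      simplexIntegral p u t fun a =>
        simplexIntegral (n - p) s u fun b => g (finJoin p n a b) := by
  induction n generalizing t with
  | zero =>
    rw [Finset.sum_range_one]
    exact congrArg g (Subsingleton.elim _ _)
  | succ n ih =>
    have hK : Continuous fun r => simplexIntegral n s r fun ts => g (Fin.cons r ts) :=
      continuous_simplexIntegral n (g := fun r ts => g (Fin.cons r ts)) (by fun_prop) s
        continuous_id
    have hterm : ∀ q, Continuous fun r => simplexIntegral q u r fun a =>
        simplexIntegral (n - q) s u fun b => g (Fin.cons r (finJoin q n a b)) := fun q =>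
      continuous_simplexIntegral q
        (continuous_simplexIntegral (n - q) (by fun_prop) s continuous_const) u continuous_id
    have hshift : ∀ q r a,
        simplexIntegral (n - q) s u (fun b => g (Fin.cons r (finJoin q n a b)))
          = simplexIntegral (n + 1 - (q + 1)) s u fun b =>
              g (finJoin (q + 1) (n + 1) (Fin.cons r a) b) := fun q r a =>
      simplexIntegral_congr_dim (by omega) s u _ _ fun b => by rw [finJoin_cons]
    calc simplexIntegral (n + 1) s t g
        = (∫ r in s..u, simplexIntegral n s r fun ts => g (Fin.cons r ts))
          + ∫ r in u..t, simplexIntegral n s r fun ts => g (Fin.cons r ts) :=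
          (intervalIntegral.integral_add_adjacent_intervals (hK.intervalIntegrable s u)
            (hK.intervalIntegrable u t)).symm
      _ = simplexIntegral (n + 1) s u g + ∑ q ∈ Finset.range (n + 1), ∫ r in u..t,
            simplexIntegral q u r fun a =>
              simplexIntegral (n - q) s u fun b => g (Fin.cons r (finJoin q n a b)) := by
          rw [← intervalIntegral.integral_finsetSum fun q _ => (hterm q).intervalIntegrable u t]
          congr 1
          exact intervalIntegral.integral_congr fun r _ => ih (by fun_prop) r
      _ = _ := by
          rw [Finset.sum_range_succ' _ (n + 1), add_comm]
          simp only [hshift]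
          simp [simplexIntegral, finJoin_zero]

end SimplexIntegral

section Words

lemma splitUpper_ne_nil (p : ℕ) (b : List ℕ) : splitUpper p b ≠ [] := by
  cases b with
  | nil => simp [splitUpper]
  | cons a l =>
    unfold splitUpper
    split_ifs
    · simp
    · split <;> simp

lemma splitUpper_cons_of_le {p a : ℕ} (h : a ≤ p) (l : List ℕ) :
    splitUpper p (a :: l) = [] :: splitUpper p l := by
  simp [splitUpper, h]

lemma splitUpper_cons_of_lt {p a : ℕ} (h : p < a) {l s : List ℕ} {rest : List (List ℕ)}
    (hl : splitUpper p l = s :: rest) :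
    splitUpper p (a :: l) = ((a - p) :: s) :: rest := by
  simp [splitUpper, Nat.not_le.mpr h, hl]

lemma upperW_cons (p : ℕ) (b : List ℕ) (B : List (List ℕ)) :
    upperW p (b :: B) = splitUpper p b ++ upperW p B := by
  simp [upperW]

lemma upperW_ne_nil {p : ℕ} {B : List (List ℕ)} (hB : B ≠ []) : upperW p B ≠ [] := by
  obtain ⟨b, B, rfl⟩ := List.exists_cons_of_ne_nil hB
  simp [upperW_cons, splitUpper_ne_nil]

lemma lowerW_flatten (p : ℕ) (B : List (List ℕ)) :
    (lowerW p B).flatten = B.flatten.filter (· ≤ p) :=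
  List.filter_flatten.symm

lemma splitUpper_flatten (p : ℕ) (b : List ℕ) :
    (splitUpper p b).flatten = (b.filter (fun a => !decide (a ≤ p))).map (· - p) := by
  induction b with
  | nil => simp [splitUpper]
  | cons a l ih =>
    by_cases h : a ≤ p
    · simp [splitUpper_cons_of_le h, h, ih]
    · obtain ⟨s, rest, hl⟩ := List.exists_cons_of_ne_nil (splitUpper_ne_nil p l)
      rw [hl] at ih
      simp_all [splitUpper_cons_of_lt (Nat.not_le.mp h) hl]

lemma upperW_flatten (p : ℕ) (B : List (List ℕ)) :
    (upperW p B).flatten = (B.flatten.filter (fun a => !decide (a ≤ p))).map (· - p) := by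
  induction B with
  | nil => rfl
  | cons b B ih => simp [upperW_cons, splitUpper_flatten, ih]

lemma length_flatten_upperW_add_lowerW (p : ℕ) (B : List (List ℕ)) :
    (upperW p B).flatten.length + (lowerW p B).flatten.length = B.flatten.length := by
  rw [upperW_flatten, lowerW_flatten, List.length_map, add_comm,
    ← List.length_eq_length_filter_add]

lemma length_filter_le_of_perm_range' {L : List ℕ} {n : ℕ} (hL : L.Perm (List.range' 1 n))
    {p : ℕ} (hp : p ≤ n) : (L.filter (· ≤ p)).length = p := by
  have hsplit : List.range' 1 n = List.range' 1 p ++ List.range' (1 + p) (n - p) := by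
    rw [List.range'_append_1]
    congr 1
    omega
  rw [(hL.filter _).length_eq, hsplit, List.filter_append, List.filter_eq_self.mpr,
    List.filter_eq_nil_iff.mpr, List.append_nil, List.length_range']
  all_goals
    intro a ha
    have := List.mem_range'_1.mp ha
    simp only [decide_eq_true_eq]
    omega

end Words

section ZList

variable {A : Type*} [One A]

lemma zList_cons (v : ℕ → A) (b : List ℕ) (L : List (List ℕ)) (ys : List A) :
    zList v (b :: L) ys = b.map v ++ zList v ([] :: L) ys := by
  cases L <;> simp [zList]

lemma zList_nil_cons {L : List (List ℕ)} (hL : L ≠ []) (v : ℕ → A) (ys : List A) :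
    zList v ([] :: L) ys = ys.headD 1 :: zList v L ys.tail := by
  obtain ⟨c, L, rfl⟩ := List.exists_cons_of_ne_nil hL
  rfl

lemma zList_congr {v w : ℕ → A} (B : List (List ℕ)) (ys : List A)
    (h : ∀ a ∈ B.flatten, v a = w a) : zList v B ys = zList w B ys := by
  fun_induction zList v B ys with
  | case1 => rfl
  | case2 b ys => exact List.map_congr_left (by simpa using h)
  | case3 b bs ys hbs ih =>
    simp only [List.flatten_cons, List.mem_append] at h
    rw [List.map_congr_left fun a ha => h a (Or.inl ha), ih fun a ha => h a (Or.inr ha),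
      zList_cons w, zList_nil_cons hbs]

lemma length_zList (v : ℕ → A) (B : List (List ℕ)) (ys : List A) :
    (zList v B ys).length = B.flatten.length + (B.length - 1) := by
  fun_induction zList v B ys with
  | case1 => rfl
  | case2 b ys => simp
  | case3 b bs ys hbs ih =>
    have : bs.length ≠ 0 := by simpa using hbs
    simp only [List.length_append, List.length_map, List.length_cons, ih, List.flatten_cons]
    omega

lemma map_zList {C : Type*} [One C] (f : A → C) (hf : f 1 = 1) (v : ℕ → A)
    (B : List (List ℕ)) (ys : List A) :
    (zList v B ys).map f = zList (f ∘ v) B (ys.map f) := by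
  fun_induction zList v B ys with
  | case1 => rfl
  | case2 b ys => simp [zList]
  | case3 b bs ys hbs ih =>
    have hhead : f (ys.headD 1) = (ys.map f).headD 1 := by cases ys <;> simp [hf]
    rw [List.map_append, List.map_cons, ih, zList_cons, zList_nil_cons hbs, List.map_map,
      hhead, List.map_tail]

/- `zList v ([] :: S) ys` is what follows a block in a tuple: the first between-tree argument
and the tuple of `S`, or nothing when `S = []`. -/
lemma zList_splitUpper_append (p : ℕ) {v w : ℕ → A} (b : List ℕ)
    (hvw : ∀ a ∈ b, p < a → v (a - p) = w a) (S : List (List ℕ)) (ys : List A) :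
    zList v (splitUpper p b ++ S) ((b.filter (· ≤ p)).map w ++ ys)
      = b.map w ++ zList v ([] :: S) ys := by
  induction b with
  | nil => simp [splitUpper]
  | cons a l ih =>
    have hvw' : ∀ x ∈ l, p < x → v (x - p) = w x := fun x hx => hvw x (by simp [hx])
    by_cases h : a ≤ p
    · rw [splitUpper_cons_of_le h, List.cons_append,
        zList_nil_cons (by simp [splitUpper_ne_nil])]
      simp [h, ih hvw']
    · obtain ⟨s, rest, hl⟩ := List.exists_cons_of_ne_nil (splitUpper_ne_nil p l)
      have := ih hvw'
      rw [hl] at this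
      rw [splitUpper_cons_of_lt (Nat.not_le.mp h) hl,
        List.filter_cons_of_neg (by simpa using h), List.cons_append, zList_cons, List.map_cons,
        List.cons_append, ← zList_cons, ← List.cons_append, this, hvw a (by simp) (by omega),
        List.map_cons, List.cons_append]

lemma zList_upperW_lowerW (p : ℕ) {v w : ℕ → A} (B : List (List ℕ))
    (hvw : ∀ a ∈ B.flatten, p < a → v (a - p) = w a) (ys : List A) :
    zList w B ys = zList v (upperW p B) (zList w (lowerW p B) ys) := by
  fun_induction zList w B ys with
  | case1 => rfl
  | case2 b ys =>
    simpa [zList, upperW, lowerW] using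
      (zList_splitUpper_append p b (by simpa using hvw) [] []).symm
  | case3 b bs ys hbs ih =>
    simp only [List.flatten_cons, List.mem_append] at hvw
    have hlow : lowerW p (b :: bs) = b.filter (· ≤ p) :: lowerW p bs := rfl
    rw [upperW_cons, hlow, zList_cons, zList_nil_cons (by simpa [lowerW] using hbs),
      zList_splitUpper_append p b fun a ha => hvw a (Or.inl ha),
      zList_nil_cons (upperW_ne_nil hbs), List.headD_cons, List.tail_cons,
      ih fun a ha => hvw a (Or.inr ha)]

end ZList

section LetterEval

variable {α A : Type*} [One A]

def letterEval (φ : α → A) {n : ℕ} (ts : Fin n → α) (ℓ : ℕ) : A :=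
  if h : ℓ - 1 < n then φ (ts ⟨ℓ - 1, h⟩) else 1

lemma letterEval_finJoin_of_le (φ : α → A) {p n : ℕ} (hpn : p ≤ n)
    (a : Fin p → α) (b : Fin (n - p) → α) {c : ℕ} (hc : 1 ≤ c) (hcp : c ≤ p) :
    letterEval φ (finJoin p n a b) c = letterEval φ a c := by
  rw [letterEval, letterEval, dif_pos (by omega), dif_pos (by omega),
    finJoin_apply_of_lt _ _ _ (by omega)]

lemma letterEval_finJoin_of_lt (φ : α → A) {p n : ℕ}
    (a : Fin p → α) (b : Fin (n - p) → α) {c : ℕ} (hpc : p < c) :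
    letterEval φ b (c - p) = letterEval φ (finJoin p n a b) c := by
  by_cases hc : c - 1 < n
  · rw [letterEval, letterEval, dif_pos (by omega), dif_pos hc,
      finJoin_apply_of_le _ _ _ (by omega)]
    congr 3
    omega
  · rw [letterEval, letterEval, dif_neg (by omega), dif_neg hc]

lemma zList_letterEval_finJoin (φ : α → A) {B : List (List ℕ)}
    (hB : ∀ c ∈ B.flatten, 1 ≤ c) {p n : ℕ} (hpn : p ≤ n) (a : Fin p → α)
    (b : Fin (n - p) → α) (ys : List A) :
    zList (letterEval φ (finJoin p n a b)) B ys
      = zList (letterEval φ b) (upperW p B) (zList (letterEval φ a) (lowerW p B) ys) := by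
  rw [zList_upperW_lowerW p B (fun c _ hc => letterEval_finJoin_of_lt φ a b hc),
    zList_congr (lowerW p B) ys]
  intro c hc
  rw [lowerW_flatten, List.mem_filter] at hc
  exact letterEval_finJoin_of_le φ hpn a b (hB c hc.1) (by simpa using hc.2)

lemma continuous_zList_letterEval_getD [TopologicalSpace α] [TopologicalSpace A] {φ : α → A}
    (hφ : Continuous φ) (n : ℕ) (B : List (List ℕ)) (ys : List A) (i : ℕ) :
    Continuous fun ts : Fin n → α => (zList (letterEval φ ts) B ys).getD i 1 := by
  let F : ℕ → C(Fin n → α, A) := fun ℓ =>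
    ⟨fun ts => letterEval φ ts ℓ, by unfold letterEval; split_ifs <;> fun_prop⟩
  have key : ∀ ts, (zList (letterEval φ ts) B ys).getD i 1
      = (zList F B (ys.map (ContinuousMap.const _))).getD i 1 ts := by
    intro ts
    have hmap := map_zList (fun g : C(Fin n → α, A) => g ts) rfl F B
      (ys.map (ContinuousMap.const _))
    rw [List.map_map] at hmap
    rw [← ContinuousMap.one_apply ts, ← List.getD_map (f := fun g : C(Fin n → α, A) => g ts),
      hmap]
    simp [F, Function.comp_def]
  simpa only [key] using ContinuousMap.continuous _

end LetterEval

section Signature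

variable {A : Type*} [NormedRing A] [NormedAlgebra ℂ A]

lemma sigApply_eq_of_length (X : ℝ → A) {B : List (List ℕ)} {q : ℕ}
    (hq : B.flatten.length = q) (s t : ℝ) {N : ℕ} (m : (Fin N → A) → A) (Ys : List A) :
    sigApply X B s t m Ys = simplexIntegral q s t fun ts =>
      m fun i => (zList (letterEval (deriv X) ts) B Ys).getD i 1 := by
  subst hq
  rfl

lemma sigApply_lowerW_upperW (X : ℝ → A) {B : List (List ℕ)} (hB : IsLF B) {p : ℕ}
    (hp : p ≤ B.flatten.length) {N : ℕ} (m : (Fin N → A) → A) (s u t : ℝ) (Ys : List A) :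
    sigApply X (lowerW p B) u t
        (fun W : Fin (p + B.length - 1) → A => sigApply X (upperW p B) s u m (List.ofFn W)) Ys
      = simplexIntegral p u t fun a => simplexIntegral (B.flatten.length - p) s u fun b =>
          m fun i =>
            (zList (letterEval (deriv X) (finJoin p B.flatten.length a b)) B Ys).getD i 1 := by
  obtain ⟨hne, hperm⟩ := hB
  have hlow : (lowerW p B).flatten.length = p := by
    rw [lowerW_flatten]
    exact length_filter_le_of_perm_range' hperm hp
  have hup : (upperW p B).flatten.length = B.flatten.length - p := by
    have := length_flatten_upperW_add_lowerW p B
    omega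
  have hk : B.length ≠ 0 := by simpa using hne
  rw [sigApply_eq_of_length X hlow]
  refine congrArg _ (funext fun a => ?_)
  have hlen : (zList (letterEval (deriv X) a) (lowerW p B) Ys).length = p + B.length - 1 := by
    rw [length_zList, hlow, lowerW, List.length_map]
    omega
  rw [List.ofFn_getD hlen, sigApply_eq_of_length X hup]
  refine congrArg _ (funext fun b => ?_)
  rw [zList_letterEval_finJoin (deriv X)
    (fun c hc => (List.mem_range'_1.mp (hperm.mem_iff.mp hc)).1) hp]

end Signature

theorem sigApply_chen_general {A : Type*} [NormedRing A] [NormedAlgebra ℂ A]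
    (X : ℝ → A) (hX : ContDiff ℝ 1 X) (B : List (List ℕ)) (hB : IsLF B)
    (m : ContinuousMultilinearMap ℂ
      (fun _ : Fin (B.flatten.length + B.length - 1) => A) A)
    (s u t : ℝ)
    (Ys : List A) :
    sigApply X B s t ⇑m Ys =
      ∑ p ∈ Finset.range (B.flatten.length + 1),
        sigApply X (lowerW p B) u t
          (fun W : Fin (p + B.length - 1) → A =>
            sigApply X (upperW p B) s u ⇑m (List.ofFn W)) Ys := by
  have hX' : Continuous (deriv X) := hX.continuous_deriv le_rfl
  calc sigApply X B s t ⇑m Ys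
      = simplexIntegral B.flatten.length s t fun ts =>
          m fun i => (zList (letterEval (deriv X) ts) B Ys).getD i 1 := rfl
    _ = _ := simplexIntegral_chen_s19 _ (m.cont.comp (continuous_pi fun i =>
          continuous_zList_letterEval_getD hX' _ B Ys i)) s u t
    _ = _ := Finset.sum_congr rfl fun p hp =>
          (sigApply_lowerW_upperW X hB (Nat.lt_succ_iff.mp (Finset.mem_range.mp hp)) _ s u t
            Ys).symm

/-- Chen relation for the non-commutative signature operators: let `A` be
a complex unital Banach algebra and `X : ℝ → A` continuously differentiable.  For every
levelled forest `f` with `n = ‖f‖`, `k = nt(f)`, every continuous `(n+k−1)`-linear map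
`m : A^{n+k−1} → A`, and all reals `s ≤ u ≤ t`,
`𝒳_{s,t}(f)(m) = Σ_{p=0}^{n} 𝒳_{u,t}(f_-^p)(𝒳_{s,u}(f_+^p)(m))`
as (continuous `(k−1)`-linear) maps `A^{k−1} → A`. -/
theorem sigApply_chen {A : Type*} [NormedRing A] [NormedAlgebra ℂ A] [CompleteSpace A]
    (X : ℝ → A) (hX : ContDiff ℝ 1 X) (B : List (List ℕ)) (hB : IsLF B)
    (m : ContinuousMultilinearMap ℂ
      (fun _ : Fin (B.flatten.length + B.length - 1) => A) A)
    (s u t : ℝ) (hsu : s ≤ u) (hut : u ≤ t)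
    (Ys : List A) (hYs : Ys.length = B.length - 1) :
    sigApply X B s t ⇑m Ys =
      ∑ p ∈ Finset.range (B.flatten.length + 1),
        sigApply X (lowerW p B) u t
          (fun W : Fin (p + B.length - 1) → A =>
            sigApply X (upperW p B) s u ⇑m (List.ofFn W)) Ys :=
  sigApply_chen_general X hX B hB m s u t Ys
end
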